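/- arXiv:2412.07158 — 11 statements merged into one kernel-verified Lean document; each statement's English description precedes it below -/
import Mathlib

section
/- Let G be a group and B : G → G a Rota–Baxter operator of weight 1, i.e. B(g)B(h) = B(g B(g) h B(g)^{-1}) for all g, h ∈ G. Then the operation g * h = g B(g) h B(g)^{-1} makes G into a group (with the same identity element). -/
/-- If `B` is a Rota–Baxter operator of weight 1 on a group `G`, then the
operation `g * h = g B(g) h B(g)⁻¹` makes `G` into a group with the same
identity element. -/
theorem stmt_0 {G : Type*} [Group G] (B : G → G)
    (hB : ∀ g h : G, B g * B h = B (g * B g * h * (B g)⁻¹)) :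
    ∃ (mul' : G → G → G) (inv' : G → G),
      (∀ g h : G, mul' g h = g * B g * h * (B g)⁻¹) ∧
      (∀ a b c : G, mul' (mul' a b) c = mul' a (mul' b c)) ∧
      (∀ a : G, mul' 1 a = a) ∧
      (∀ a : G, mul' a 1 = a) ∧
      (∀ a : G, mul' (inv' a) a = 1) := by
  have hB1 : B 1 = 1 := by simpa using hB 1 1
  refine ⟨fun g h => g * B g * h * (B g)⁻¹, fun a => (B a)⁻¹ * a⁻¹ * B a,
    fun g h => rfl, ?_, ?_, ?_, ?_⟩
  · intro a b c
    simp only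
    rw [← hB a b]
    group
  · intro a
    simp only [hB1]
    group
  · intro a
    group
  · intro a
    simp only
    have key : B a * B ((B a)⁻¹ * a⁻¹ * B a) = 1 := by
      rw [hB a]
      have : a * B a * ((B a)⁻¹ * a⁻¹ * B a) * (B a)⁻¹ = 1 := by group
      rw [this, hB1]
    have hx : B ((B a)⁻¹ * a⁻¹ * B a) = (B a)⁻¹ :=
      ((inv_eq_of_mul_eq_one_right key).symm)
    rw [hx]
    group
end

section
/- Let (G, ·, B) be a Rota–Baxter group with the descendent operation g * h = g B(g) h B(g)^{-1}. Then B is also a Rota–Baxter operator of weight 1 on the group (G, *). -/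
/-- If `B` is a Rota–Baxter operator of weight 1 on `(G, ·)`, then `B` is also a
Rota–Baxter operator of weight 1 on the descendent group `(G, *)`, where
`g * h = g B(g) h B(g)⁻¹` and the `*`-inverse of `a` is `B(a)⁻¹ a⁻¹ B(a)`. -/
theorem stmt_1 {G : Type*} [Group G] (B : G → G)
    (hB : ∀ g h : G, B g * B h = B (g * B g * h * (B g)⁻¹)) :
    ∀ (star : G → G → G) (sinv : G → G),
      (∀ g h : G, star g h = g * B g * h * (B g)⁻¹) →
      (∀ g : G, sinv g = (B g)⁻¹ * g⁻¹ * B g) →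
      ∀ g h : G,
        star (B g) (B h) = B (star g (star (B g) (star h (sinv (B g))))) := by
  intro star sinv hstar hsinv g h
  have hB1 : B 1 = 1 := by
    have h1 := hB 1 1
    have h2 : (1 : G) * B 1 * 1 * (B 1)⁻¹ = 1 := by group
    rw [h2] at h1
    exact mul_right_cancel (h1.trans (one_mul (B 1)).symm)
  have hZ : B ((B (B g))⁻¹ * (B g)⁻¹ * B (B g)) = (B (B g))⁻¹ := by
    have h1 := hB (B g) ((B (B g))⁻¹ * (B g)⁻¹ * B (B g))
    have h2 : B g * B (B g) * ((B (B g))⁻¹ * (B g)⁻¹ * B (B g)) * (B (B g))⁻¹ = 1 := by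
      group
    rw [h2, hB1] at h1
    exact (mul_eq_one_iff_inv_eq.mp h1).symm
  rw [hstar, hstar, hstar, hstar, hsinv, ← hB g, ← hB (B g), ← hB h, hZ]
  group
end

section
/- Let G be a group and B : G → G a group Rota–Baxter operator of weight 1 whose linear extension to the group algebra k[G] is an algebra Rota–Baxter operator of weight λ (i.e. B(g)B(h) = B(B(g)h + gB(h) + λ gh) in k[G] for all g, h ∈ G). Then λ = -1, and for all g, h ∈ G either (B(g)B(h) = B(B(g)h) and B(gB(h)) = B(gh)) or (B(g)B(h) = B(gB(h)) and B(B(g)h) = B(gh)). -/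
/-- If a group Rota–Baxter operator `B` on `G` extends linearly to an algebra
Rota–Baxter operator of weight `lam` on the group algebra `k[G]`, then
`lam = -1` and for all `g, h ∈ G` one of the two dichotomy conditions holds. -/
theorem stmt_3 {k : Type*} [Field k] {G : Type*} [Group G] (B : G → G)
    (hB : ∀ g h : G, B g * B h = B (g * B g * h * (B g)⁻¹))
    (lam : k) (R : MonoidAlgebra k G →ₗ[k] MonoidAlgebra k G)
    (hR : ∀ g : G, R (MonoidAlgebra.of k G g) = MonoidAlgebra.of k G (B g))
    (hRB : ∀ a b : MonoidAlgebra k G,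
      R a * R b = R (R a * b + a * R b + lam • (a * b))) :
    lam = -1 ∧
      ∀ g h : G,
        (B g * B h = B (B g * h) ∧ B (g * B h) = B (g * h)) ∨
        (B g * B h = B (g * B h) ∧ B (B g * h) = B (g * h)) := by
  have h1 : B 1 = 1 := by
    have e := hB 1 1
    have : (1 : G) * B 1 * 1 * (B 1)⁻¹ = 1 := by group
    rw [this] at e
    exact mul_left_cancel (a := B 1) (b := B 1) (c := 1) (by rw [mul_one]; exact e)
  have hR1 : R 1 = 1 := by
    rw [show (1 : MonoidAlgebra k G) = MonoidAlgebra.of k G 1 from (map_one _).symm, hR, h1]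
  have hlam : lam = -1 := by
    have e := hRB 1 1
    rw [hR1] at e
    simp only [one_mul, mul_one] at e
    rw [map_add, map_add, map_smul, hR1] at e
    -- e : 1 = 1 + 1 + lam • 1
    have e3 : (lam + 1) • (1 : MonoidAlgebra k G) = 0 := by
      rw [add_smul, one_smul]
      have e4 : (1 : MonoidAlgebra k G) + (1 + lam • 1) = 1 + 0 := by
        rw [add_zero, ← add_assoc]; exact e.symm
      have e5 := add_left_cancel e4
      rw [add_comm] at e5; exact e5
    rcases smul_eq_zero.mp e3 with h | h
    · exact eq_neg_of_add_eq_zero_left h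
    · exact absurd h one_ne_zero
  -- key identity in the group algebra
  have key : ∀ g h : G, (MonoidAlgebra.of k G) (B g * B h) =
      MonoidAlgebra.of k G (B (B g * h)) + MonoidAlgebra.of k G (B (g * B h))
        - MonoidAlgebra.of k G (B (g * h)) := by
    intro g h
    have e := hRB (MonoidAlgebra.of k G g) (MonoidAlgebra.of k G h)
    rw [hR, hR] at e
    simp only [← map_mul] at e
    rw [map_add, map_add, map_smul, hR, hR, hR, hlam, neg_one_smul] at e
    rw [sub_eq_add_neg]
    exact e
  have hinj : Function.Injective (MonoidAlgebra.of k G) := MonoidAlgebra.of_injective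
  -- B is idempotent on its image
  have h2 : ∀ g : G, B (B g) = B g := by
    intro g
    have e := key g 1
    rw [h1] at e
    simp only [mul_one] at e
    have : MonoidAlgebra.of k G (B (B g)) = MonoidAlgebra.of k G (B g) := by
      rw [e]; abel
    exact hinj this
  -- B (B g * g⁻¹) = 1
  have h4 : ∀ g : G, B (B g * g⁻¹) = 1 := by
    intro g
    have e1 := hB g ((B g)⁻¹ * g⁻¹ * B g)
    have a1 : g * B g * ((B g)⁻¹ * g⁻¹ * B g) * (B g)⁻¹ = 1 := by group
    rw [a1, h1] at e1
    -- e1 : B g * B ((B g)⁻¹ * g⁻¹ * B g) = 1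
    have e2 := hB (B g) ((B g)⁻¹ * g⁻¹ * B g)
    rw [h2 g] at e2
    have a2 : B g * B g * ((B g)⁻¹ * g⁻¹ * B g) * (B g)⁻¹ = B g * g⁻¹ := by group
    rw [a2] at e2
    -- e2 : B g * B ((B g)⁻¹ * g⁻¹ * B g) = B (B g * g⁻¹)
    rw [e1] at e2
    exact e2.symm
  -- the crucial group identity : B (B g * h) = B (g * h)
  have h5 : ∀ g h : G, B (B g * h) = B (g * h) := by
    intro g h
    have e := hB (B g * g⁻¹) (g * h)
    rw [h4 g] at e
    have a1 : B g * g⁻¹ * 1 * (g * h) * (1 : G)⁻¹ = B g * h := by group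
    rw [a1, one_mul] at e
    exact e.symm
  refine ⟨hlam, fun g h => Or.inr ⟨?_, h5 g h⟩⟩
  have e := key g h
  rw [h5 g h] at e
  have : MonoidAlgebra.of k G (B g * B h) = MonoidAlgebra.of k G (B (g * B h)) := by
    rw [e]; abel
  exact hinj this
end

section
/- Let G be a group and B : G → G a group Rota–Baxter operator such that for all g, h ∈ G either (B(g)B(h) = B(B(g)h) and B(gB(h)) = B(gh)) or (B(g)B(h) = B(gB(h)) and B(B(g)h) = B(gh)). Then B is idempotent: B(B(g)) = B(g) for all g ∈ G. -/
theorem map_one_of_rotaBaxter {G : Type*} [Group G] {B : G → G}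
    (hB : ∀ g h : G, B g * B h = B (g * B g * h * (B g)⁻¹)) : B 1 = 1 := by
  have h := hB 1 1
  rw [one_mul, mul_one, mul_inv_cancel] at h
  exact mul_eq_right.mp h

/-- A GA–Rota–Baxter operator on a group is idempotent. -/
theorem stmt_4 {G : Type*} [Group G] (B : G → G)
    (hB : ∀ g h : G, B g * B h = B (g * B g * h * (B g)⁻¹))
    (hGA : ∀ g h : G,
      (B g * B h = B (B g * h) ∧ B (g * B h) = B (g * h)) ∨
      (B g * B h = B (g * B h) ∧ B (B g * h) = B (g * h))) :
    ∀ g : G, B (B g) = B g := by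
  intro g
  rcases hGA g 1 with ⟨hmul, -⟩ | ⟨-, hmap⟩
  · rw [map_one_of_rotaBaxter hB, mul_one] at hmul
    exact hmul.symm
  · simpa only [mul_one] using hmap
end

section
/- Let B be a GA–Rota–Baxter operator on a group G, with H = Im B and K = ker B = {g ∈ G : B(g) = 1}. Then G = KH is an exact factorization: every g ∈ G can be written as g = kh with k ∈ K, h ∈ H, and K ∩ H = {1}. -/
/-- For a GA–Rota–Baxter operator `B` on `G`, with `H = Im B` and
`K = ker B`, one has the exact factorization `G = K H`. -/
theorem stmt_5 {G : Type*} [Group G] (B : G → G)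
    (hB : ∀ g h : G, B g * B h = B (g * B g * h * (B g)⁻¹))
    (hGA : ∀ g h : G,
      (B g * B h = B (B g * h) ∧ B (g * B h) = B (g * h)) ∨
      (B g * B h = B (g * B h) ∧ B (B g * h) = B (g * h))) :
    (∀ g : G, ∃ x h : G, B x = 1 ∧ h ∈ Set.range B ∧ g = x * h) ∧
      (∀ g : G, B g = 1 → g ∈ Set.range B → g = 1) := by
  -- B 1 = 1
  have hone : B 1 = 1 := by
    have h := hB 1 1
    rw [show (1 : G) * B 1 * 1 * (B 1)⁻¹ = 1 by group] at h
    exact mul_right_cancel (b := B 1) (by rw [one_mul]; exact h)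
  -- left multiplication by kernel elements does not change B
  have hker : ∀ k x : G, B k = 1 → B (k * x) = B x := by
    intro k x hk
    have h := hB k x
    rw [hk] at h
    simpa using h.symm
  -- B fixes its image
  have hfix : ∀ x : G, B (B x) = B x := by
    intro x
    rcases hGA 1 x with ⟨_, h2'⟩ | ⟨h1', _⟩
    · simpa using h2'
    · simpa [hone] using h1'.symm
  constructor
  · intro g
    set a := B g with ha
    -- B (a⁻¹ * g⁻¹ * a) = a⁻¹
    have hw : B (a⁻¹ * g⁻¹ * a) = a⁻¹ := by
      have h := hB g (a⁻¹ * g⁻¹ * a)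
      rw [← ha, show g * a * (a⁻¹ * g⁻¹ * a) * a⁻¹ = 1 by group, hone] at h
      exact eq_inv_of_mul_eq_one_right h
    have key : B (g * a⁻¹) = 1 := by
      rcases hGA g (a⁻¹ * g⁻¹ * a) with ⟨h1', _⟩ | ⟨h1', _⟩
      · -- case 1: 1 = B (g⁻¹ * a), then use a second pair
        rw [hw, ← ha, mul_inv_cancel,
          show a * (a⁻¹ * g⁻¹ * a) = g⁻¹ * a by group] at h1'
        have hk0 : B (g⁻¹ * a) = 1 := h1'.symm
        have hk0' : B (a⁻¹ * g) = 1 := by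
          have h2 := hker (g⁻¹ * a) (a⁻¹ * g) hk0
          rw [show g⁻¹ * a * (a⁻¹ * g) = 1 by group, hone] at h2
          exact h2.symm
        -- second pair
        have hw2 : B (a⁻¹ * g * (a⁻¹ * g⁻¹ * a)) = a⁻¹ := by
          rw [show a⁻¹ * g * (a⁻¹ * g⁻¹ * a) = a⁻¹ * g * (a⁻¹ * g⁻¹ * a) from rfl,
            hker (a⁻¹ * g) (a⁻¹ * g⁻¹ * a) hk0', hw]
        rcases hGA g (a⁻¹ * g * (a⁻¹ * g⁻¹ * a)) with ⟨p1, _⟩ | ⟨p1, _⟩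
        · rw [hw2, ← ha, mul_inv_cancel,
            show a * (a⁻¹ * g * (a⁻¹ * g⁻¹ * a)) = g * a⁻¹ * (g⁻¹ * a) by group] at p1
          have hk1 : B (g * a⁻¹ * (g⁻¹ * a)) = 1 := p1.symm
          have h3 := hker (g * a⁻¹ * (g⁻¹ * a)) (a⁻¹ * g) hk1
          rw [show g * a⁻¹ * (g⁻¹ * a) * (a⁻¹ * g) = g * a⁻¹ by group, hk0'] at h3
          exact h3
        · rw [hw2, ← ha, mul_inv_cancel] at p1
          exact p1.symm
      · rw [hw, ← ha, mul_inv_cancel] at h1'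
        exact h1'.symm
    exact ⟨g * a⁻¹, a, key, ⟨g, rfl⟩, by group⟩
  · rintro g hg1 ⟨x, rfl⟩
    rw [hfix x] at hg1
    exact hg1
end

section
/- Let B be a GA–Rota–Baxter operator on a group G, with H = Im B and K = ker B. Then B(kh) = h for all k ∈ K and h ∈ H. -/
/-- For a GA–Rota–Baxter operator `B` on `G`, one has `B(kh) = h` for all
`k ∈ ker B` and `h ∈ Im B`. -/
theorem stmt_6 {G : Type*} [Group G] (B : G → G)
    (hB : ∀ g h : G, B g * B h = B (g * B g * h * (B g)⁻¹))
    (hGA : ∀ g h : G,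
      (B g * B h = B (B g * h) ∧ B (g * B h) = B (g * h)) ∨
      (B g * B h = B (g * B h) ∧ B (B g * h) = B (g * h))) :
    ∀ x h : G, B x = 1 → h ∈ Set.range B → B (x * h) = h := by
  rintro x h hx ⟨g, rfl⟩
  have key : B x * B g = B (x * g) := by
    have := hB x g
    rw [hx] at this; simpa [hx] using this
  rcases hGA x g with ⟨h1, h2⟩ | ⟨h1, h2⟩
  · rw [h2, ← key, hx, one_mul]
  · rw [← h1, hx, one_mul]
end

section
/- Let B be a GA–Rota–Baxter operator on a group G with H = Im B. Then H is a commutative subgroup of G. -/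
/-!
For a Rota–Baxter operator of weight 1, `B g * B h = B (g * B g * h * (B g)⁻¹)` shows that `Im B`
is closed under products, and `B g * B ((B g)⁻¹ * g⁻¹ * B g) = B 1 = 1` that it is closed under
inverses. The GA condition with `h = 1` makes `B` idempotent, so `B` fixes its image pointwise.
For `a, b ∈ Im B` this turns the Rota–Baxter identity into `a * b = a * a * b * a⁻¹`, i.e. `b * a = a * b`.
-/

def IsGroupRotaBaxter {G : Type*} [Group G] (B : G → G) : Prop :=
  ∀ g h : G, B g * B h = B (g * B g * h * (B g)⁻¹)

namespace IsGroupRotaBaxter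

variable {G : Type*} [Group G] {B : G → G}

theorem map_one (hB : IsGroupRotaBaxter B) : B 1 = 1 := by
  have h := hB 1 1
  rwa [one_mul, mul_one, mul_inv_cancel, mul_eq_left] at h

theorem inv_mem_range (hB : IsGroupRotaBaxter B) (g : G) : (B g)⁻¹ ∈ Set.range B := by
  refine ⟨(B g)⁻¹ * g⁻¹ * B g, (inv_eq_of_mul_eq_one_right ?_).symm⟩
  rw [hB, ← hB.map_one]
  congr 1
  group

def rangeSubgroup (hB : IsGroupRotaBaxter B) : Subgroup G where
  carrier := Set.range B
  one_mem' := ⟨1, hB.map_one⟩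
  mul_mem' := by
    rintro _ _ ⟨g, rfl⟩ ⟨h, rfl⟩
    exact ⟨_, (hB g h).symm⟩
  inv_mem' := by
    rintro _ ⟨g, rfl⟩
    exact hB.inv_mem_range g

theorem commute_of_mem_range (hB : IsGroupRotaBaxter B) (hidem : ∀ g, B (B g) = B g)
    {a b : G} (ha : a ∈ Set.range B) (hb : b ∈ Set.range B) : Commute a b := by
  have fixed : ∀ x ∈ Set.range B, B x = x := by
    rintro _ ⟨g, rfl⟩
    exact hidem g
  have hconj : a * a * b * a⁻¹ ∈ hB.rangeSubgroup := by
    have ha' : a ∈ hB.rangeSubgroup := ha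
    have hb' : b ∈ hB.rangeSubgroup := hb
    exact mul_mem (mul_mem (mul_mem ha' ha') hb') (inv_mem ha')
  have key : a * b = a * a * b * a⁻¹ := by
    calc a * b = B a * B b := by rw [fixed a ha, fixed b hb]
      _ = B (a * a * b * a⁻¹) := by rw [hB, fixed a ha]
      _ = a * a * b * a⁻¹ := fixed _ hconj
  calc a * b = a⁻¹ * (a * a * b * a⁻¹) * a := by group
    _ = b * a := by rw [← key]; group

end IsGroupRotaBaxter

theorem map_map_eq_of_ga {G : Type*} [Group G] {B : G → G} (hone : B 1 = 1)
    (hGA : ∀ g h : G,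
      (B g * B h = B (B g * h) ∧ B (g * B h) = B (g * h)) ∨
      (B g * B h = B (g * B h) ∧ B (B g * h) = B (g * h))) (g : G) :
    B (B g) = B g := by
  rcases hGA g 1 with ⟨h, -⟩ | ⟨-, h⟩
  · rw [hone, mul_one] at h
    exact h.symm
  · rwa [mul_one, mul_one] at h

/-- For a GA–Rota–Baxter operator `B` on `G`, the image `H = Im B` is a
commutative subgroup of `G`. -/
theorem stmt_7 {G : Type*} [Group G] (B : G → G)
    (hB : ∀ g h : G, B g * B h = B (g * B g * h * (B g)⁻¹))
    (hGA : ∀ g h : G,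
      (B g * B h = B (B g * h) ∧ B (g * B h) = B (g * h)) ∨
      (B g * B h = B (g * B h) ∧ B (B g * h) = B (g * h))) :
    ∃ H : Subgroup G, (H : Set G) = Set.range B ∧
      ∀ a ∈ H, ∀ b ∈ H, a * b = b * a := by
  have hRB : IsGroupRotaBaxter B := hB
  have hidem := map_map_eq_of_ga hRB.map_one hGA
  exact ⟨hRB.rangeSubgroup, rfl, fun a ha b hb => hRB.commute_of_mem_range hidem ha hb⟩
end

section
/- Let B be a GA–Rota–Baxter operator on a group G with H = Im B and K = ker B. Then h² K h^{-2} ⊆ K for every h ∈ H. -/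
namespace IsGroupRotaBaxter

variable {G : Type*} [Group G] {B : G → G}

theorem map_of_map_eq_self (hB : IsGroupRotaBaxter B) {h : G} (hh : B h = h) (k : G) :
    h * B k = B (h * h * k * h⁻¹) := by
  simpa only [hh] using hB h k

theorem map_inv_of_map_eq_self (hB : IsGroupRotaBaxter B) {h : G} (hh : B h = h) :
    B h⁻¹ = h⁻¹ := by
  refine eq_inv_of_mul_eq_one_right ?_
  rw [hB.map_of_map_eq_self hh, mul_inv_cancel_right, mul_inv_cancel, hB.map_one]

theorem map_conj_sq_of_map_eq_self (hB : IsGroupRotaBaxter B) {h x : G} (hh : B h = h)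
    (hx : B x = 1) : B (h ^ 2 * x * (h ^ 2)⁻¹) = 1 := by
  have hconj : B (h * h * x * h⁻¹) = h := by
    simpa only [hx, mul_one] using (hB.map_of_map_eq_self hh x).symm
  have e := hB (h * h * x * h⁻¹) h⁻¹
  rw [hconj, hB.map_inv_of_map_eq_self hh, mul_inv_cancel] at e
  rw [e, mul_inv_cancel_right, pow_two, mul_inv_rev, ← mul_assoc]

end IsGroupRotaBaxter

theorem map_map_eq_map_of_GA {G : Type*} [Group G] {B : G → G} (h1 : B 1 = 1)
    (hGA : ∀ g h : G,
      (B g * B h = B (B g * h) ∧ B (g * B h) = B (g * h)) ∨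
      (B g * B h = B (g * B h) ∧ B (B g * h) = B (g * h))) (g : G) :
    B (B g) = B g := by
  rcases hGA g 1 with ⟨e, -⟩ | ⟨-, e⟩
  · simpa only [h1, mul_one] using e.symm
  · simpa only [mul_one] using e

/-- For a GA–Rota–Baxter operator `B` on `G` with `H = Im B` and `K = ker B`,
one has `h² K h⁻² ⊆ K` for all `h ∈ H`. -/
theorem stmt_8 {G : Type*} [Group G] (B : G → G)
    (hB : ∀ g h : G, B g * B h = B (g * B g * h * (B g)⁻¹))
    (hGA : ∀ g h : G,
      (B g * B h = B (B g * h) ∧ B (g * B h) = B (g * h)) ∨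
      (B g * B h = B (g * B h) ∧ B (B g * h) = B (g * h))) :
    ∀ h : G, h ∈ Set.range B → ∀ x : G, B x = 1 →
      B (h ^ 2 * x * (h ^ 2)⁻¹) = 1 := by
  have hRB : IsGroupRotaBaxter B := hB
  rintro _ ⟨g, rfl⟩ x hx
  exact hRB.map_conj_sq_of_map_eq_self (map_map_eq_map_of_GA hRB.map_one hGA g) hx
end

section
/- Let G be a group with an exact factorization G = KH (K, H subgroups, K ∩ H = {1}, every element uniquely g = kh) such that H is commutative and h² K h^{-2} ⊆ K for all h ∈ H. Define B : G → G by B(kh) = h for k ∈ K, h ∈ H. Then B is a group Rota–Baxter operator of weight 1: B(g₁)B(g₂) = B(g₁ B(g₁) g₂ B(g₁)^{-1}) for all g₁, g₂ ∈ G. -/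
/-- Given an exact factorization `G = K H` with `H` commutative and
`h² K h⁻² ⊆ K` for all `h ∈ H`, the map `B(kh) = h` is a group Rota–Baxter
operator of weight 1 on `G`. -/
theorem stmt_9 {G : Type*} [Group G] (K H : Subgroup G)
    (hfac : ∀ g : G, ∃ x ∈ K, ∃ h ∈ H, g = x * h)
    (hdisj : ∀ g : G, g ∈ K → g ∈ H → g = 1)
    (hcomm : ∀ a ∈ H, ∀ b ∈ H, a * b = b * a)
    (hconj : ∀ h ∈ H, ∀ x ∈ K, h ^ 2 * x * (h ^ 2)⁻¹ ∈ K)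
    (B : G → G) (hB : ∀ x ∈ K, ∀ h ∈ H, B (x * h) = h) :
    ∀ g₁ g₂ : G, B g₁ * B g₂ = B (g₁ * B g₁ * g₂ * (B g₁)⁻¹) := by
  intro g₁ g₂
  obtain ⟨k₁, hk₁, h₁, hh₁, rfl⟩ := hfac g₁
  obtain ⟨k₂, hk₂, h₂, hh₂, rfl⟩ := hfac g₂
  rw [hB k₁ hk₁ h₁ hh₁, hB k₂ hk₂ h₂ hh₂]
  have hk' := hconj h₁ hh₁ k₂ hk₂
  have key : k₁ * h₁ * h₁ * (k₂ * h₂) * h₁⁻¹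
      = (k₁ * (h₁ ^ 2 * k₂ * (h₁ ^ 2)⁻¹)) * (h₁ * h₂) := by
    have hc : Commute h₁ h₂ := hcomm h₁ hh₁ h₂ hh₂
    have hc' : h₁⁻¹ * h₂ = h₂ * h₁⁻¹ := hc.inv_left.eq
    simp [mul_assoc, pow_two, mul_inv_rev, ← hc']
  rw [key, hB _ (K.mul_mem hk₁ hk') _ (H.mul_mem hh₁ hh₂)]
end

section
/- Let G be a group with exact factorization G = KH, H commutative, h² K h^{-2} ⊆ K for all h ∈ H, and B(kh) = h. Then for all g₁, g₂ ∈ G one has B(g₁)B(g₂) = B(g₁ B(g₂)) and B(B(g₁) g₂) = B(g₁ g₂); consequently, the linear extension of B to the group algebra k[G] satisfies the algebra Rota–Baxter identity of weight -1: B(a)B(b) = B(B(a)b + aB(b) - ab). -/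
/-!
Writing `g₁ = x h` with `x ∈ K`, `h ∈ H`, the projection `B` is invariant under left
multiplication by `K` and fixes `H` pointwise; hence
`B (B g₁ * g₂) = B (x * (h * g₂)) = B (g₁ * g₂)`, and replacing `g₂` by `B g₂` gives
`B (g₁ * B g₂) = B (B g₁ * B g₂) = B g₁ * B g₂`. The Rota–Baxter identity is bilinear in `(a, b)`,
so it suffices to check it on group elements, where it reduces to the two identities.
-/

theorem MonoidAlgebra.rotaBaxter_of_basis {k G : Type*} [CommRing k] [Monoid G]
    (R : MonoidAlgebra k G →ₗ[k] MonoidAlgebra k G) (β : G → G)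
    (hR : ∀ g, R (of k G g) = of k G (β g))
    (hmul : ∀ g₁ g₂, β g₁ * β g₂ = β (g₁ * β g₂))
    (habsorb : ∀ g₁ g₂, β (β g₁ * g₂) = β (g₁ * g₂))
    (a b : MonoidAlgebra k G) : R a * R b = R (R a * b + a * R b - a * b) := by
  suffices (LinearMap.mul k _ ∘ₗ R).compl₂ R =
      (LinearMap.mul k _ ∘ₗ R + (LinearMap.mul k _).compl₂ R - LinearMap.mul k _).compr₂ R from
    congr($this a b)
  ext g₁ g₂ : 4
  have hsingle : ∀ g, R (single g 1) = single (β g) 1 := by simpa using hR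
  simp [hsingle, hmul, habsorb]

section ExactFactorization

variable {G : Type*} [Group G] {K H : Subgroup G} {proj : G → G}

theorem proj_mem (hfac : ∀ g : G, ∃ x ∈ K, ∃ h ∈ H, g = x * h)
    (hproj : ∀ x ∈ K, ∀ h ∈ H, proj (x * h) = h) (g : G) : proj g ∈ H := by
  obtain ⟨x, hx, h, hh, rfl⟩ := hfac g
  rwa [hproj x hx h hh]

theorem proj_of_mem (hproj : ∀ x ∈ K, ∀ h ∈ H, proj (x * h) = h) {h : G} (hh : h ∈ H) :
    proj h = h := by
  simpa using hproj 1 K.one_mem h hh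

theorem proj_mul_of_mem_left (hfac : ∀ g : G, ∃ x ∈ K, ∃ h ∈ H, g = x * h)
    (hproj : ∀ x ∈ K, ∀ h ∈ H, proj (x * h) = h) {x : G} (hx : x ∈ K) (g : G) :
    proj (x * g) = proj g := by
  obtain ⟨y, hy, h, hh, rfl⟩ := hfac g
  rw [← mul_assoc, hproj _ (K.mul_mem hx hy) h hh, hproj y hy h hh]

theorem proj_proj_mul (hfac : ∀ g : G, ∃ x ∈ K, ∃ h ∈ H, g = x * h)
    (hproj : ∀ x ∈ K, ∀ h ∈ H, proj (x * h) = h) (g₁ g₂ : G) :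
    proj (proj g₁ * g₂) = proj (g₁ * g₂) := by
  obtain ⟨x, hx, h, hh, rfl⟩ := hfac g₁
  rw [hproj x hx h hh, mul_assoc, proj_mul_of_mem_left hfac hproj hx]

theorem proj_mul_proj (hfac : ∀ g : G, ∃ x ∈ K, ∃ h ∈ H, g = x * h)
    (hproj : ∀ x ∈ K, ∀ h ∈ H, proj (x * h) = h) (g₁ g₂ : G) :
    proj g₁ * proj g₂ = proj (g₁ * proj g₂) := by
  rw [← proj_proj_mul hfac hproj,
    proj_of_mem hproj (H.mul_mem (proj_mem hfac hproj g₁) (proj_mem hfac hproj g₂))]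

end ExactFactorization

theorem stmt_10_general {G : Type*} [Group G] (K H : Subgroup G)
    (hfac : ∀ g : G, ∃ x ∈ K, ∃ h ∈ H, g = x * h)
    (B : G → G) (hB : ∀ x ∈ K, ∀ h ∈ H, B (x * h) = h)
    {k : Type*} [Field k]
    (R : MonoidAlgebra k G →ₗ[k] MonoidAlgebra k G)
    (hR : ∀ g : G, R (MonoidAlgebra.of k G g) = MonoidAlgebra.of k G (B g)) :
    (∀ g₁ g₂ : G, B g₁ * B g₂ = B (g₁ * B g₂) ∧ B (B g₁ * g₂) = B (g₁ * g₂)) ∧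
      ∀ a b : MonoidAlgebra k G, R a * R b = R (R a * b + a * R b - a * b) :=
  ⟨fun g₁ g₂ => ⟨proj_mul_proj hfac hB g₁ g₂, proj_proj_mul hfac hB g₁ g₂⟩,
    MonoidAlgebra.rotaBaxter_of_basis R B hR (proj_mul_proj hfac hB) (proj_proj_mul hfac hB)⟩

/-- Given an exact factorization `G = K H` with `H` commutative and
`h² K h⁻² ⊆ K` for all `h ∈ H`, the map `B(kh) = h` satisfies
`B(g₁)B(g₂) = B(g₁ B(g₂))` and `B(B(g₁) g₂) = B(g₁ g₂)`, and its linear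
extension to the group algebra `k[G]` is an algebra Rota–Baxter operator of
weight `-1`. -/
theorem stmt_10 {G : Type*} [Group G] (K H : Subgroup G)
    (hfac : ∀ g : G, ∃ x ∈ K, ∃ h ∈ H, g = x * h)
    (hdisj : ∀ g : G, g ∈ K → g ∈ H → g = 1)
    (hcomm : ∀ a ∈ H, ∀ b ∈ H, a * b = b * a)
    (hconj : ∀ h ∈ H, ∀ x ∈ K, h ^ 2 * x * (h ^ 2)⁻¹ ∈ K)
    (B : G → G) (hB : ∀ x ∈ K, ∀ h ∈ H, B (x * h) = h)
    {k : Type*} [Field k]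
    (R : MonoidAlgebra k G →ₗ[k] MonoidAlgebra k G)
    (hR : ∀ g : G, R (MonoidAlgebra.of k G g) = MonoidAlgebra.of k G (B g)) :
    (∀ g₁ g₂ : G, B g₁ * B g₂ = B (g₁ * B g₂) ∧ B (B g₁ * g₂) = B (g₁ * g₂)) ∧
      ∀ a b : MonoidAlgebra k G, R a * R b = R (R a * b + a * R b - a * b) :=
  stmt_10_general K H hfac B hB R hR
end

section
/- Let k be a field with char k ≠ 2 and a ∈ k. The linear map B on H₄ given by B(1) = 1, B(g) = g, B(x) = B(gx) = a·1 - a·g satisfies the Hopf Rota–Baxter identity B(u)B(v) = B(u₍₁₎ B(u₍₂₎) v S(B(u₍₃₎))) for all u, v ∈ H₄. -/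
/-!
A concrete model of the Sweedler Hopf algebra `H₄` over a field `k`:
elements are coordinate vectors `Fin 4 → k` with respect to the basis
`1, g, x, gx`, where `g² = 1`, `x² = 0`, `xg = -gx`.
-/

variable {k : Type*} [Field k]

/-- Multiplication of `H₄` in coordinates w.r.t. the basis `1, g, x, gx`. -/
def H4mul (a b : Fin 4 → k) : Fin 4 → k :=
  ![a 0 * b 0 + a 1 * b 1,
    a 0 * b 1 + a 1 * b 0,
    a 0 * b 2 + a 1 * b 3 + a 2 * b 0 - a 3 * b 1,
    a 0 * b 3 + a 1 * b 2 - a 2 * b 1 + a 3 * b 0]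

/-- The antipode of `H₄`: `S(1) = 1`, `S(g) = g`, `S(x) = -gx`, `S(gx) = x`. -/
def H4S (a : Fin 4 → k) : Fin 4 → k := ![a 0, a 1, a 3, -(a 2)]

/-- The basis vectors `1, g, x, gx` of `H₄`. -/
def e (i : Fin 4) : Fin 4 → k := fun j => if j = i then 1 else 0

/-- The right-hand side argument `a₍₁₎ B(a₍₂₎) b S(B(a₍₃₎))` of the Hopf
Rota–Baxter identity, computed from `Δ²(1) = 1⊗1⊗1`, `Δ²(g) = g⊗g⊗g`,
`Δ²(x) = x⊗1⊗1 + g⊗x⊗1 + g⊗g⊗x`,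
`Δ²(gx) = gx⊗g⊗g + 1⊗gx⊗g + 1⊗1⊗gx`, extended linearly. -/
def rbArg (B : (Fin 4 → k) → (Fin 4 → k)) (a b : Fin 4 → k) : Fin 4 → k :=
  let t : Fin 4 → Fin 4 → Fin 4 → (Fin 4 → k) := fun i j l =>
    H4mul (e i) (H4mul (B (e j)) (H4mul b (H4S (B (e l)))))
  a 0 • t 0 0 0 + a 1 • t 1 1 1
    + a 2 • (t 2 0 0 + t 1 2 0 + t 1 1 2)
    + a 3 • (t 3 1 1 + t 0 3 1 + t 0 0 3)

lemma H4mul_a0 (a b : Fin 4 → k) : H4mul a b 0 = a 0 * b 0 + a 1 * b 1 := rfl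
lemma H4mul_a1 (a b : Fin 4 → k) : H4mul a b 1 = a 0 * b 1 + a 1 * b 0 := rfl
lemma H4mul_a2 (a b : Fin 4 → k) :
    H4mul a b 2 = a 0 * b 2 + a 1 * b 3 + a 2 * b 0 - a 3 * b 1 := rfl
lemma H4mul_a3 (a b : Fin 4 → k) :
    H4mul a b 3 = a 0 * b 3 + a 1 * b 2 - a 2 * b 1 + a 3 * b 0 := rfl
lemma H4S_a0 (a : Fin 4 → k) : H4S a 0 = a 0 := rfl
lemma H4S_a1 (a : Fin 4 → k) : H4S a 1 = a 1 := rfl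
lemma H4S_a2 (a : Fin 4 → k) : H4S a 2 = a 3 := rfl
lemma H4S_a3 (a : Fin 4 → k) : H4S a 3 = -(a 2) := rfl
lemma e_aa (i j : Fin 4) : e i j = if j = i then (1:k) else 0 := rfl

set_option maxHeartbeats 1000000 in
/-- Over a field of characteristic `≠ 2`, the linear map `B` on `H₄` with
`B(1) = 1`, `B(g) = g`, `B(x) = B(gx) = a·1 - a·g` satisfies the Hopf
Rota–Baxter identity. -/
theorem stmt_15 (h2 : (2 : k) ≠ 0) (a : k)
    (B : (Fin 4 → k) → (Fin 4 → k))
    (hB : ∀ u : Fin 4 → k,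
      B u = u 0 • e 0 + u 1 • e 1 + (u 2 + u 3) • (a • e 0 + (-a) • e 1)) :
    ∀ u v : Fin 4 → k, H4mul (B u) (B v) = B (rbArg B u v) := by
  intro u v
  have h : ∀ i : Fin 4, H4mul (B u) (B v) i = B (rbArg B u v) i := by
    have c0 : H4mul (B u) (B v) 0 = B (rbArg B u v) 0 := by
      simp only [rbArg, hB, Pi.add_apply, Pi.smul_apply, smul_eq_mul,
          H4mul_a0, H4mul_a1, H4mul_a2, H4mul_a3, H4S_a0, H4S_a1, H4S_a2, H4S_a3,
          e_aa, Fin.isValue, Fin.reduceEq, reduceIte,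
          mul_one, mul_zero, zero_mul, one_mul, add_zero, zero_add,
          mul_neg, neg_mul, neg_neg, neg_zero, sub_zero, zero_sub]
      try ring
    have c1 : H4mul (B u) (B v) 1 = B (rbArg B u v) 1 := by
      simp only [rbArg, hB, Pi.add_apply, Pi.smul_apply, smul_eq_mul,
          H4mul_a0, H4mul_a1, H4mul_a2, H4mul_a3, H4S_a0, H4S_a1, H4S_a2, H4S_a3,
          e_aa, Fin.isValue, Fin.reduceEq, reduceIte,
          mul_one, mul_zero, zero_mul, one_mul, add_zero, zero_add,
          mul_neg, neg_mul, neg_neg, neg_zero, sub_zero, zero_sub]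
      try ring
    have c2 : H4mul (B u) (B v) 2 = B (rbArg B u v) 2 := by
      simp only [rbArg, hB, Pi.add_apply, Pi.smul_apply, smul_eq_mul,
          H4mul_a0, H4mul_a1, H4mul_a2, H4mul_a3, H4S_a0, H4S_a1, H4S_a2, H4S_a3,
          e_aa, Fin.isValue, Fin.reduceEq, reduceIte,
          mul_one, mul_zero, zero_mul, one_mul, add_zero, zero_add,
          mul_neg, neg_mul, neg_neg, neg_zero, sub_zero, zero_sub]
      try ring
    have c3 : H4mul (B u) (B v) 3 = B (rbArg B u v) 3 := by
      simp only [rbArg, hB, Pi.add_apply, Pi.smul_apply, smul_eq_mul,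
          H4mul_a0, H4mul_a1, H4mul_a2, H4mul_a3, H4S_a0, H4S_a1, H4S_a2, H4S_a3,
          e_aa, Fin.isValue, Fin.reduceEq, reduceIte,
          mul_one, mul_zero, zero_mul, one_mul, add_zero, zero_add,
          mul_neg, neg_mul, neg_neg, neg_zero, sub_zero, zero_sub]
      try ring
    intro i
    fin_cases i
    exacts [c0, c1, c2, c3]
  funext i; exact h i
end
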